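/- Let U be a nonempty open subset of ℝⁿ. For i = 1, 2, let Aᵢ be an n×n real matrix, bᵢ, cᵢ ∈ ℝⁿ and δᵢ ∈ ℝ be such that the (n+1)×(n+1) block matrix Mᵢ = [[Aᵢ, bᵢ],[cᵢᵀ, δᵢ]] is invertible and ⟨cᵢ,x⟩ + δᵢ ≠ 0 for all x ∈ U, and let fᵢ(x) = (Aᵢ·x + bᵢ)/(⟨cᵢ,x⟩ + δᵢ). If f₁(x) = f₂(x) for all x ∈ U, then there exists a nonzero real number λ with M₂ = λ·M₁; in particular f₁ and f₂ agree at every point of ℝⁿ where both denominators are nonzero. -/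

import Mathlib

/-- The predicate that `d` is the Hilbert distance of the bounded open convex set `Ω`:
`d x x = 0`, and for distinct `x y ∈ Ω` there are frontier points `x̄` (with `x`
strictly between `x̄` and `y`) and `ȳ` (with `y` strictly between `x` and `ȳ`) such that
`d x y = log ((‖ȳ - x‖/‖ȳ - y‖) * (‖x̄ - y‖/‖x̄ - x‖))`. -/
def IsHilbertDist {n : ℕ} (Ω : Set (EuclideanSpace ℝ (Fin n)))
    (d : EuclideanSpace ℝ (Fin n) → EuclideanSpace ℝ (Fin n) → ℝ) : Prop :=
  (∀ x, d x x = 0) ∧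
  ∀ x ∈ Ω, ∀ y ∈ Ω, x ≠ y →
    ∃ xb ∈ frontier Ω, ∃ yb ∈ frontier Ω,
      x ∈ openSegment ℝ xb y ∧ y ∈ openSegment ℝ x yb ∧
      d x y = Real.log ((‖yb - x‖ / ‖yb - y‖) * (‖xb - y‖ / ‖xb - x‖))

/-- The `(n+1) × (n+1)` block matrix `[[A, b], [cᵀ, δ]]`. -/
noncomputable def projMat {n : ℕ} (A : Matrix (Fin n) (Fin n) ℝ)
    (b c : EuclideanSpace ℝ (Fin n)) (δ : ℝ) :
    Matrix (Fin n ⊕ Fin 1) (Fin n ⊕ Fin 1) ℝ :=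
  Matrix.fromBlocks A (Matrix.replicateCol (Fin 1) b.ofLp) (Matrix.replicateRow (Fin 1) c.ofLp) (Matrix.of fun _ _ => δ)

/-- The fractional linear map `x ↦ (A·x + b) / (⟨c,x⟩ + δ)`. -/
noncomputable def fracLin {n : ℕ} (A : Matrix (Fin n) (Fin n) ℝ)
    (b c : EuclideanSpace ℝ (Fin n)) (δ : ℝ)
    (x : EuclideanSpace ℝ (Fin n)) : EuclideanSpace ℝ (Fin n) :=
  ((∑ i, c i * x i) + δ)⁻¹ • ((WithLp.equiv 2 (Fin n → ℝ)).symm (A.mulVec x) + b)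

/-- `f` is the restriction to `U` of a projective transformation of `ℝPⁿ`:
it has fractional linear form `x ↦ (A·x + b)/(⟨c,x⟩ + δ)` on `U`, with the block matrix
`[[A, b],[cᵀ, δ]]` invertible and the denominator nonvanishing on `U`. -/
def IsProjectiveRestriction {n : ℕ} (U : Set (EuclideanSpace ℝ (Fin n)))
    (f : EuclideanSpace ℝ (Fin n) → EuclideanSpace ℝ (Fin n)) : Prop :=
  ∃ (A : Matrix (Fin n) (Fin n) ℝ) (b c : EuclideanSpace ℝ (Fin n)) (δ : ℝ),
    (projMat A b c δ).det ≠ 0 ∧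
    ∀ x ∈ U, ((∑ i, c i * x i) + δ ≠ 0) ∧ f x = fracLin A b c δ x

/-!
In homogeneous coordinates `fracLin A b c δ x` is the dehomogenization of `M (x, 1)`, where
`M = projMat A b c δ`. Writing `o` for the last coordinate, agreement of `f₁` and `f₂` at `x`
says `(M₂ u)ₒ • M₁ u = (M₁ u)ₒ • M₂ u` for `u = (x, 1)`. Both sides are quadratic in `u`, so the
identity holds on the open cone over `U`, and, being analytic, on all of `ℝⁿ⁺¹`. For
`N = M₂ M₁⁻¹` it reads `(N w)ₒ • w = wₒ • N w` for every `w`; testing it on the basis vectors and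
on sums `eₒ + eₚ` shows that `N` is a scalar matrix.
-/

open Matrix Filter Topology Set

section ScalarMatrix

variable {K ι : Type*} [Field K] [Fintype ι] [DecidableEq ι]

theorem Matrix.eq_smul_one_of_forall_mulVec_apply_smul (N : Matrix ι ι K) (o : ι)
    (h : ∀ w, (N *ᵥ w) o • w = w o • N *ᵥ w) : N = N o o • 1 := by
  have hsingle : ∀ p k, N o p * (Pi.single p 1 : ι → K) k = (Pi.single p 1 : ι → K) o * N k p :=
    fun p k => by simpa [mulVec_single_one] using congrFun (h (Pi.single p 1)) k
  have hrow : ∀ p, p ≠ o → N o p = 0 := fun p hp => by simpa [hp] using hsingle p p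
  have hcol : ∀ k, N k o = N o o * (Pi.single o 1 : ι → K) k := fun k => by
    simpa using (hsingle o k).symm
  have hoff : ∀ p, p ≠ o → ∀ k, N k p = N o o * (Pi.single p 1 : ι → K) k := by
    intro p hp k
    have hpair := congrFun (h (Pi.single o 1 + Pi.single p 1)) k
    simp only [mulVec_add, mulVec_single_one, Pi.add_apply, Pi.smul_apply, smul_eq_mul, col_apply,
      Pi.single_eq_same, Pi.single_eq_of_ne hp.symm, hrow p hp, add_zero] at hpair
    rw [hcol k] at hpair
    linear_combination -hpair
  ext k p
  rcases eq_or_ne p o with rfl | hp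
  · simpa [Pi.single_apply, one_apply] using hcol k
  · simpa [Pi.single_apply, one_apply] using hoff p hp k

theorem Matrix.exists_eq_smul_of_forall_mulVec_apply_smul (M₁ M₂ : Matrix ι ι K) (o : ι)
    (hM₁ : IsUnit M₁.det) (h : ∀ u, (M₂ *ᵥ u) o • M₁ *ᵥ u = (M₁ *ᵥ u) o • M₂ *ᵥ u) :
    ∃ lam : K, M₂ = lam • M₁ := by
  set N := M₂ * M₁⁻¹
  have hN : N = N o o • 1 := N.eq_smul_one_of_forall_mulVec_apply_smul o fun w => by
    simpa [N, mulVec_mulVec, mul_nonsing_inv _ hM₁] using h (M₁⁻¹ *ᵥ w)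
  refine ⟨N o o, ?_⟩
  calc M₂ = N * M₁ := by simp [N, Matrix.mul_assoc, nonsing_inv_mul _ hM₁]
    _ = (N o o • 1) * M₁ := congrArg (· * M₁) hN
    _ = N o o • M₁ := by rw [smul_mul, one_mul]

end ScalarMatrix

theorem Matrix.forall_mulVec_apply_smul_of_eventually {𝕜 ι : Type*} [RCLike 𝕜] [Fintype ι]
    (M₁ M₂ : Matrix ι ι 𝕜) (o : ι) {u₀ : ι → 𝕜}
    (h : ∀ᶠ u in 𝓝 u₀, (M₂ *ᵥ u) o • M₁ *ᵥ u = (M₁ *ᵥ u) o • M₂ *ᵥ u) (u : ι → 𝕜) :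
    (M₂ *ᵥ u) o • M₁ *ᵥ u = (M₁ *ᵥ u) o • M₂ *ᵥ u := by
  have hlin : ∀ M : Matrix ι ι 𝕜, AnalyticOnNhd 𝕜 (M *ᵥ ·) univ := fun M =>
    M.mulVecLin.toContinuousLinearMap.analyticOnNhd univ
  have hprod : ∀ M M' : Matrix ι ι 𝕜, AnalyticOnNhd 𝕜 (fun u => (M *ᵥ u) o • M' *ᵥ u) univ :=
    fun M M' => (((ContinuousLinearMap.proj o).analyticOnNhd univ).comp (hlin M)
      (mapsTo_univ _ _)).smul (hlin M')
  exact congrFun ((hprod M₂ M₁).eq_of_eventuallyEq (hprod M₁ M₂) h) u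

section Homogeneous

variable {n : ℕ}

def homogenize (x : EuclideanSpace ℝ (Fin n)) : Fin n ⊕ Fin 1 → ℝ := Sum.elim x.ofLp 1

noncomputable def dehomogenize (u : Fin n ⊕ Fin 1 → ℝ) : EuclideanSpace ℝ (Fin n) :=
  (u (Sum.inr 0))⁻¹ • WithLp.toLp 2 (u ∘ Sum.inl)

theorem dehomogenize_homogenize (x : EuclideanSpace ℝ (Fin n)) :
    dehomogenize (homogenize x) = x := by
  ext; simp [dehomogenize, homogenize]

theorem dehomogenize_smul {lam : ℝ} (hlam : lam ≠ 0) (u : Fin n ⊕ Fin 1 → ℝ) :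
    dehomogenize (lam • u) = dehomogenize u := by
  ext
  simp only [dehomogenize, Pi.smul_apply, smul_eq_mul, PiLp.smul_apply,
    Function.comp_apply]
  field_simp

theorem smul_homogenize_dehomogenize {u : Fin n ⊕ Fin 1 → ℝ} (hu : u (Sum.inr 0) ≠ 0) :
    u (Sum.inr 0) • homogenize (dehomogenize u) = u := by
  ext (i | i)
  · simp [dehomogenize, homogenize, hu]
  · simp [dehomogenize, homogenize, Fin.fin_one_eq_zero i]

theorem continuousAt_dehomogenize {u : Fin n ⊕ Fin 1 → ℝ} (hu : u (Sum.inr 0) ≠ 0) :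
    ContinuousAt dehomogenize u :=
  ((continuous_apply _).continuousAt.inv₀ hu).smul
    ((PiLp.continuous_toLp 2 _).comp (by fun_prop)).continuousAt

theorem smul_eq_smul_of_dehomogenize_eq {v w : Fin n ⊕ Fin 1 → ℝ} (hv : v (Sum.inr 0) ≠ 0)
    (hw : w (Sum.inr 0) ≠ 0) (h : dehomogenize v = dehomogenize w) :
    w (Sum.inr 0) • v = v (Sum.inr 0) • w := by
  ext (j | i)
  · have hj := congrArg (· j) h
    simp only [dehomogenize, PiLp.smul_apply, Function.comp_apply, smul_eq_mul] at hj
    field_simp at hj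
    simp only [Pi.smul_apply, smul_eq_mul]
    linear_combination hj
  · simp [Fin.fin_one_eq_zero i, mul_comm]

theorem fracLin_eq_dehomogenize (A : Matrix (Fin n) (Fin n) ℝ) (b c : EuclideanSpace ℝ (Fin n))
    (δ : ℝ) (x : EuclideanSpace ℝ (Fin n)) :
    fracLin A b c δ x = dehomogenize (projMat A b c δ *ᵥ homogenize x) := by
  ext j
  simp [fracLin, dehomogenize, homogenize, projMat, fromBlocks_mulVec, mulVec, dotProduct]

theorem projMat_mulVec_homogenize_inr (A : Matrix (Fin n) (Fin n) ℝ) (b c : EuclideanSpace ℝ (Fin n))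
    (δ : ℝ) (x : EuclideanSpace ℝ (Fin n)) :
    (projMat A b c δ *ᵥ homogenize x) (Sum.inr 0) = ∑ i, c i * x i + δ := by
  simp [projMat, homogenize, mulVec, dotProduct]

theorem eventually_mulVec_apply_smul_of_forall_homogenize
    (M₁ M₂ : Matrix (Fin n ⊕ Fin 1) (Fin n ⊕ Fin 1) ℝ) {U : Set (EuclideanSpace ℝ (Fin n))}
    (hU : IsOpen U) {x₀ : EuclideanSpace ℝ (Fin n)} (hx₀ : x₀ ∈ U)
    (h : ∀ x ∈ U, (M₂ *ᵥ homogenize x) (Sum.inr 0) • M₁ *ᵥ homogenize x =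
      (M₁ *ᵥ homogenize x) (Sum.inr 0) • M₂ *ᵥ homogenize x) :
    ∀ᶠ u in 𝓝 (homogenize x₀),
      (M₂ *ᵥ u) (Sum.inr 0) • M₁ *ᵥ u = (M₁ *ᵥ u) (Sum.inr 0) • M₂ *ᵥ u := by
  have hx₀' : homogenize x₀ (Sum.inr 0) ≠ 0 := by simp [homogenize]
  have hcone : ∀ᶠ u in 𝓝 (homogenize x₀), u (Sum.inr 0) ≠ 0 ∧ dehomogenize u ∈ U :=
    ((continuous_apply _).continuousAt.eventually_ne hx₀').and
      ((continuousAt_dehomogenize hx₀').preimage_mem_nhds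
        (by rw [dehomogenize_homogenize]; exact hU.mem_nhds hx₀))
  filter_upwards [hcone] with u ⟨hu, hmem⟩
  rw [← smul_homogenize_dehomogenize hu]
  simp only [mulVec_smul, Pi.smul_apply, smul_eq_mul, smul_smul, mul_right_comm _ _ (u _)]
  rw [mul_smul, h _ hmem, ← mul_smul]

end Homogeneous

/-- two fractional linear transformations agreeing on a nonempty open set
have proportional matrices, and hence agree wherever both are defined. -/
theorem fracLin_unique {n : ℕ} (U : Set (EuclideanSpace ℝ (Fin n)))
    (hne : U.Nonempty) (hO : IsOpen U)
    (A₁ A₂ : Matrix (Fin n) (Fin n) ℝ) (b₁ c₁ b₂ c₂ : EuclideanSpace ℝ (Fin n)) (δ₁ δ₂ : ℝ)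
    (hdet₁ : (projMat A₁ b₁ c₁ δ₁).det ≠ 0) (hdet₂ : (projMat A₂ b₂ c₂ δ₂).det ≠ 0)
    (hden₁ : ∀ x ∈ U, (∑ i, c₁ i * x i) + δ₁ ≠ 0)
    (hden₂ : ∀ x ∈ U, (∑ i, c₂ i * x i) + δ₂ ≠ 0)
    (heq : ∀ x ∈ U, fracLin A₁ b₁ c₁ δ₁ x = fracLin A₂ b₂ c₂ δ₂ x) :
    (∃ lam : ℝ, lam ≠ 0 ∧ projMat A₂ b₂ c₂ δ₂ = lam • projMat A₁ b₁ c₁ δ₁) ∧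
    ∀ x : EuclideanSpace ℝ (Fin n),
      (∑ i, c₁ i * x i) + δ₁ ≠ 0 → (∑ i, c₂ i * x i) + δ₂ ≠ 0 →
      fracLin A₁ b₁ c₁ δ₁ x = fracLin A₂ b₂ c₂ δ₂ x := by
  obtain ⟨x₀, hx₀⟩ := hne
  have hcross : ∀ x ∈ U,
      (projMat A₂ b₂ c₂ δ₂ *ᵥ homogenize x) (Sum.inr 0) • projMat A₁ b₁ c₁ δ₁ *ᵥ homogenize x =
        (projMat A₁ b₁ c₁ δ₁ *ᵥ homogenize x) (Sum.inr 0) • projMat A₂ b₂ c₂ δ₂ *ᵥ homogenize x :=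
    fun x hx => smul_eq_smul_of_dehomogenize_eq
      (by simpa only [projMat_mulVec_homogenize_inr] using hden₁ x hx)
      (by simpa only [projMat_mulVec_homogenize_inr] using hden₂ x hx)
      (by simpa only [fracLin_eq_dehomogenize] using heq x hx)
  obtain ⟨lam, hlam⟩ := exists_eq_smul_of_forall_mulVec_apply_smul _ _ _ hdet₁.isUnit
    (forall_mulVec_apply_smul_of_eventually _ _ _
      (eventually_mulVec_apply_smul_of_forall_homogenize _ _ hO hx₀ hcross))
  have hlam₀ : lam ≠ 0 := by
    rintro rfl
    simp [hlam] at hdet₂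
  refine ⟨⟨lam, hlam₀, hlam⟩, fun x _ _ => ?_⟩
  rw [fracLin_eq_dehomogenize, fracLin_eq_dehomogenize, hlam, smul_mulVec,
    dehomogenize_smul hlam₀]
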